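/- arXiv:2410.18602 — 2 statements merged into one kernel-verified Lean document; each statement's English description precedes it below -/
import Mathlib

section
/- For any report profile θ' and any order o ∈ O(V), the seller's revenue in PDA under order o, Rev^o(θ') = Σ_{i∈N} p_i^o(θ'), satisfies Rev^o(θ') = (SW(θ', π^o) − SW*(θ', V, π^o)) + SW*(θ', o_{≼s}), where π^o is the final allocation produced by PDA under order o. -/
namespace DA

open scoped Classical

/-- A report profile for selling `k` homogeneous items: each agent reports a
valuation over quantities `0, …, k` and a set of neighbors. -/
structure Profile (V : Type*) (k : ℕ) where
  val : V → ℕ → ℝ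
  nbr : V → Set V

/-- A valuation is valid if it is normalized (`v 0 = 0`) and has
non-increasing marginals on `{0, …, k}`. -/
def ValidVal (k : ℕ) (v : ℕ → ℝ) : Prop :=
  v 0 = 0 ∧ ∀ q : ℕ, q + 2 ≤ k → v (q + 2) - v (q + 1) ≤ v (q + 1) - v q

variable {V : Type*}

/-- A profile is valid (w.r.t. seller `s`) if every buyer's valuation is valid. -/
def Profile.Valid {k : ℕ} (θ : Profile V k) (s : V) : Prop :=
  ∀ i : V, i ≠ s → ValidVal k (θ.val i)

/-- The reported (undirected) adjacency: `{i, j}` is an edge whenever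
`j ∈ r'_i` (or symmetrically `i ∈ r'_j`). -/
def Profile.adj {k : ℕ} (θ : Profile V k) (i j : V) : Prop :=
  j ∈ θ.nbr i ∨ i ∈ θ.nbr j

/-- The feasible set `F(θ', B)` of a coalition `B`: the buyers in `B` that are
connected to the seller `s` by a path of reported edges lying inside `B`
(empty if `s ∉ B`). -/
def Profile.feasible {k : ℕ} (θ : Profile V k) (s : V) (B : Set V) : Set V :=
  {i | i ≠ s ∧ i ∈ B ∧ s ∈ B ∧
    Relation.ReflTransGen (fun a b => θ.adj a b ∧ a ∈ B ∧ b ∈ B) s i}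

/-- Updating agent `i`'s report in a profile. -/
def updateAgent [DecidableEq V] {k : ℕ} (θ : Profile V k) (i : V)
    (v : ℕ → ℝ) (r : Set V) : Profile V k :=
  ⟨Function.update θ.val i v, Function.update θ.nbr i r⟩

/-- The profile `θ'_B` obtained by removing (setting to nil) the reports of
all agents outside the coalition `B`. -/
noncomputable def Profile.restrict {k : ℕ} (θ : Profile V k) (B : Set V) : Profile V k :=
  ⟨fun i q => if i ∈ B then θ.val i q else 0,
   fun i => if i ∈ B then θ.nbr i ∩ B else ∅⟩

section Homogeneous

variable [Fintype V] [DecidableEq V]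

/-- Social welfare of an allocation `π` under reports `θ`. -/
def SW {k : ℕ} (θ : Profile V k) (s : V) (π : V → ℕ) : ℝ :=
  ∑ i ∈ Finset.univ.erase s, θ.val i (π i)

/-- The allocations admissible for a coalition `B` with irrevocable prior
allocation `πhat`: at most `k` items in total are allocated (none to the
seller), only buyers in `F(θ, B)` receive items, and nobody receives fewer
items than in `πhat`. -/
def feasAllocs {k : ℕ} (θ : Profile V k) (s : V) (B : Set V) (πhat : V → ℕ) :
    Set (V → ℕ) :=
  {π | π s = 0 ∧ (∑ i ∈ Finset.univ.erase s, π i) ≤ k ∧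
    (∀ i, i ∉ θ.feasible s B → π i = 0) ∧ ∀ j, j ≠ s → πhat j ≤ π j}

/-- `SW*(θ, B, πhat)`: the maximum social welfare over the admissible
allocations for coalition `B` with prior allocation `πhat`. -/
noncomputable def SWstar {k : ℕ} (θ : Profile V k) (s : V) (B : Set V)
    (πhat : V → ℕ) : ℝ :=
  sSup (SW θ s '' feasAllocs θ s B πhat)

/-- A chosen allocation attaining `SW*(θ, B, πhat)`. -/
noncomputable def bestAlloc {k : ℕ} (θ : Profile V k) (s : V) (B : Set V)
    (πhat : V → ℕ) : V → ℕ :=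
  Classical.epsilon fun π =>
    π ∈ feasAllocs θ s B πhat ∧ SW θ s π = SWstar θ s B πhat

/-- `o_{≺i}`: the set of agents strictly preceding `i` in the order `o`. -/
def pred (o : V ≃ Fin (Fintype.card V)) (i : V) : Set V := {j | o j < o i}

/-- `o_{≼i} = o_{≺i} ∪ {i}`. -/
def predeq (o : V ≃ Fin (Fintype.card V)) (i : V) : Set V := {j | o j ≤ o i}

/-- The partial allocation produced by PDA after the first `t` agents of the
order `o` have been traversed: the seller is skipped, and each traversed buyer
`i` receives her share in a chosen allocation attaining
`SW*(θ, o_{≼i}, π^{o≺i})`, earlier allocations being irrevocable. -/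
noncomputable def pdaStep {k : ℕ} (θ : Profile V k) (s : V)
    (o : V ≃ Fin (Fintype.card V)) : ℕ → V → ℕ
  | 0 => fun _ => 0
  | t + 1 =>
    if h : t < Fintype.card V then
      let i := o.symm ⟨t, h⟩
      if i = s then pdaStep θ s o t
      else Function.update (pdaStep θ s o t) i
        (bestAlloc θ s (predeq o i) (pdaStep θ s o t) i)
    else pdaStep θ s o t

/-- `π^{o≺i}`: the allocation fixed by PDA right before agent `i` is traversed. -/
noncomputable def pdaPrior {k : ℕ} (θ : Profile V k) (s : V)
    (o : V ≃ Fin (Fintype.card V)) (i : V) : V → ℕ :=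
  pdaStep θ s o (o i : ℕ)

/-- The final allocation `π^o` produced by PDA under the order `o`. -/
noncomputable def pdaAlloc {k : ℕ} (θ : Profile V k) (s : V)
    (o : V ≃ Fin (Fintype.card V)) : V → ℕ :=
  pdaStep θ s o (Fintype.card V)

/-- The payment charged by PDA to agent `i` under the order `o`:
`p_i = SW*(θ, o_{≺i}, π^{o≺i}) − SW*(θ, o_{≼i}, π^{o≺i}) + v'_i(π_i)`, except
that agents traversed after all `k` items have been allocated pay `0`
(and the seller pays nothing). -/
noncomputable def pdaPay {k : ℕ} (θ : Profile V k) (s : V)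
    (o : V ≃ Fin (Fintype.card V)) (i : V) : ℝ :=
  if i = s then 0
  else if (∑ j ∈ Finset.univ.erase s, pdaPrior θ s o i j) = k then 0
  else SWstar θ s (pred o i) (pdaPrior θ s o i)
    - SWstar θ s (predeq o i) (pdaPrior θ s o i)
    + θ.val i (pdaAlloc θ s o i)

/-- `u_i^o`: the utility of buyer `i` with true valuation `v` under order `o`. -/
noncomputable def pdaUtil {k : ℕ} (v : ℕ → ℝ) (θ : Profile V k) (s : V)
    (o : V ≃ Fin (Fintype.card V)) (i : V) : ℝ :=
  v (pdaAlloc θ s o i) - pdaPay θ s o i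

/-- `E_PDA(u_i)`: buyer `i`'s expected utility over the uniformly random order. -/
noncomputable def pdaExpUtil {k : ℕ} (v : ℕ → ℝ) (θ : Profile V k) (s : V)
    (i : V) : ℝ :=
  (∑ o : V ≃ Fin (Fintype.card V), pdaUtil v θ s o i) /
    ((Fintype.card V).factorial : ℝ)

/-- `μ(θ)`: the fraction of orders for which PDA terminates with no item sold. -/
noncomputable def mu {k : ℕ} (θ : Profile V k) (s : V) : ℝ :=
  (Nat.card {o : V ≃ Fin (Fintype.card V) // ∀ j, pdaAlloc θ s o j = 0} : ℝ) /
    ((Fintype.card V).factorial : ℝ)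

/-- The Shapley contribution `φ_i(θ)` of agent `i`. -/
noncomputable def shapley {k : ℕ} (θ : Profile V k) (s : V) (i : V) : ℝ :=
  ∑ B ∈ (Finset.univ.erase i).powerset,
    ((B.card.factorial * (Fintype.card V - B.card - 1).factorial : ℝ) /
      ((Fintype.card V).factorial : ℝ)) *
    (SWstar θ s (↑(insert i B)) 0 - SWstar θ s (↑B) 0)

end Homogeneous

end DA


/-! Write `Φ t` for the optimal welfare `SW*` reachable by the first `t` agents of the order
from the allocation PDA has fixed after traversing them. A buyer at position `t` pays
`Φ t - Φ (t + 1)` plus her reported value for what she receives: choosing an optimal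
allocation leaves `SW*` unchanged when her share is fixed, and once the items are exhausted
`Φ` no longer moves and she receives nothing. Summing over the buyers telescopes to
`Φ 0 - Φ n` minus the seller's step `Φ (o s) - Φ (o s + 1)`; before the seller arrives no
buyer is connected to her, so `Φ 0 = Φ (o s) = 0`, and `Φ (o s + 1) = SW*(θ', o_{≼s})`. -/

theorem sum_comp_equiv_fin_sub_succ {α M : Type*} [Fintype α] [AddCommGroup M] {n : ℕ}
    (e : α ≃ Fin n) (f : ℕ → M) :
    ∑ a, (f (e a) - f (e a + 1)) = f 0 - f n := by
  rw [e.sum_comp (fun t : Fin n => f t - f (t + 1)),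
    Fin.sum_univ_eq_sum_range (fun t => f t - f (t + 1)), Finset.sum_range_sub']

namespace DA

section Feasible

variable {V : Type*} {k : ℕ} {θ : Profile V k} {s : V}

theorem feasible_mono {B B' : Set V} (h : B ⊆ B') : θ.feasible s B ⊆ θ.feasible s B' :=
  fun _ ⟨his, hiB, hsB, hpath⟩ => ⟨his, h hiB, h hsB,
    Relation.ReflTransGen.mono (fun _ _ hab => ⟨hab.1, h hab.2.1, h hab.2.2⟩) _ _ hpath⟩

theorem feasible_eq_empty {B : Set V} (hs : s ∉ B) : θ.feasible s B = ∅ :=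
  Set.eq_empty_of_forall_notMem fun _ hi => hs hi.2.2.1

end Feasible

section Welfare

variable {V : Type*} [Fintype V] [DecidableEq V] {k : ℕ} {θ : Profile V k} {s : V}

theorem feasAllocs_mono {B B' : Set V} (h : B ⊆ B') (πhat : V → ℕ) :
    feasAllocs θ s B πhat ⊆ feasAllocs θ s B' πhat :=
  fun _ ⟨hs, hsum, hout, hprior⟩ =>
    ⟨hs, hsum, fun i hi => hout i fun hiB => hi (feasible_mono h hiB), hprior⟩

theorem feasAllocs_anti {B : Set V} {πhat πhat' : V → ℕ}
    (hle : ∀ j, j ≠ s → πhat j ≤ πhat' j) :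
    feasAllocs θ s B πhat' ⊆ feasAllocs θ s B πhat :=
  fun _ ⟨hs, hsum, hout, hprior⟩ =>
    ⟨hs, hsum, hout, fun j hj => (hle j hj).trans (hprior j hj)⟩

theorem feasAllocs_finite (B : Set V) (πhat : V → ℕ) : (feasAllocs θ s B πhat).Finite := by
  refine (Set.Finite.pi (t := fun _ : V => Set.Iic k) fun _ => Set.finite_Iic k).subset ?_
  intro π hπ i _
  rcases eq_or_ne i s with rfl | hi
  · simp [hπ.1]
  · exact (Finset.single_le_sum (fun j _ => Nat.zero_le (π j))
      (Finset.mem_erase.mpr ⟨hi, Finset.mem_univ i⟩)).trans hπ.2.1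

theorem le_SWstar {B : Set V} {πhat π : V → ℕ} (h : π ∈ feasAllocs θ s B πhat) :
    SW θ s π ≤ SWstar θ s B πhat :=
  le_csSup ((feasAllocs_finite B πhat).image _).bddAbove ⟨π, h, rfl⟩

theorem SWstar_anti {B : Set V} {πhat πhat' : V → ℕ}
    (hle : ∀ j, j ≠ s → πhat j ≤ πhat' j) (hne : (feasAllocs θ s B πhat').Nonempty) :
    SWstar θ s B πhat' ≤ SWstar θ s B πhat :=
  csSup_le_csSup ((feasAllocs_finite B πhat).image _).bddAbove (hne.image _)
    (Set.image_mono (feasAllocs_anti hle))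

theorem bestAlloc_spec {B : Set V} {πhat : V → ℕ} (h : (feasAllocs θ s B πhat).Nonempty) :
    bestAlloc θ s B πhat ∈ feasAllocs θ s B πhat ∧
      SW θ s (bestAlloc θ s B πhat) = SWstar θ s B πhat := by
  obtain ⟨π, hπ, hSW⟩ := (h.image (SW θ s)).csSup_mem ((feasAllocs_finite B πhat).image _)
  exact Classical.epsilon_spec (p := fun π => π ∈ feasAllocs θ s B πhat ∧
    SW θ s π = SWstar θ s B πhat) ⟨π, hπ, hSW⟩

theorem update_le_of_mem_feasAllocs {B : Set V} {πhat π : V → ℕ} (j : V)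
    (hπ : π ∈ feasAllocs θ s B πhat) (l : V) (hl : l ≠ s) :
    Function.update πhat j (π j) l ≤ π l := by
  rcases eq_or_ne l j with rfl | hlj
  · simp
  · simpa [hlj] using hπ.2.2.2 l hl

theorem le_update_of_mem_feasAllocs {B : Set V} {πhat π : V → ℕ} {j : V}
    (hπ : π ∈ feasAllocs θ s B πhat) (hj : j ≠ s) (l : V) :
    πhat l ≤ Function.update πhat j (π j) l := by
  rcases eq_or_ne l j with rfl | hlj
  · simpa using hπ.2.2.2 l hj
  · simp [hlj]

theorem update_mem_feasAllocs {B : Set V} {πhat π : V → ℕ} {j : V}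
    (hπhat : πhat ∈ feasAllocs θ s B πhat) (hπ : π ∈ feasAllocs θ s B πhat)
    (hj : j ≠ s) :
    Function.update πhat j (π j) ∈ feasAllocs θ s B (Function.update πhat j (π j)) := by
  refine ⟨by simpa [hj.symm] using hπhat.1, ?_, fun i hi => ?_, fun _ _ => le_rfl⟩
  · calc ∑ i ∈ Finset.univ.erase s, Function.update πhat j (π j) i
        ≤ ∑ i ∈ Finset.univ.erase s, π i := Finset.sum_le_sum fun i hi =>
          update_le_of_mem_feasAllocs j hπ i (Finset.ne_of_mem_erase hi)
      _ ≤ k := hπ.2.1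
  · rcases eq_or_ne i j with rfl | hij
    · simpa using hπ.2.2.1 i hi
    · simpa [hij] using hπhat.2.2.1 i hi

theorem SWstar_update_bestAlloc {B : Set V} {πhat : V → ℕ} {j : V}
    (h : πhat ∈ feasAllocs θ s B πhat) (hj : j ≠ s) :
    SWstar θ s B (Function.update πhat j (bestAlloc θ s B πhat j)) = SWstar θ s B πhat := by
  obtain ⟨hbest, hSW⟩ := bestAlloc_spec ⟨πhat, h⟩
  have hbest' : bestAlloc θ s B πhat ∈
      feasAllocs θ s B (Function.update πhat j (bestAlloc θ s B πhat j)) :=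
    ⟨hbest.1, hbest.2.1, hbest.2.2.1, update_le_of_mem_feasAllocs j hbest⟩
  exact le_antisymm (SWstar_anti (fun l _ => le_update_of_mem_feasAllocs hbest hj l)
    (Set.nonempty_of_mem hbest'))
    (hSW ▸ le_SWstar hbest')

theorem feasAllocs_eq_singleton_of_sum_eq {B : Set V} {πhat : V → ℕ}
    (h : πhat ∈ feasAllocs θ s B πhat) (hsum : ∑ i ∈ Finset.univ.erase s, πhat i = k) :
    feasAllocs θ s B πhat = {πhat} := by
  refine Set.eq_singleton_iff_unique_mem.mpr ⟨h, fun π hπ => funext fun i => ?_⟩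
  have hle : ∀ i ∈ Finset.univ.erase s, πhat i ≤ π i := fun i hi =>
    hπ.2.2.2 i (Finset.ne_of_mem_erase hi)
  have hsum_eq := le_antisymm (Finset.sum_le_sum hle) (hsum ▸ hπ.2.1)
  rcases eq_or_ne i s with rfl | hi
  · rw [hπ.1, h.1]
  · exact ((Finset.sum_eq_sum_iff_of_le hle).mp hsum_eq i
      (Finset.mem_erase.mpr ⟨hi, Finset.mem_univ i⟩)).symm

theorem SWstar_eq_SW_of_sum_eq {B : Set V} {πhat : V → ℕ}
    (h : πhat ∈ feasAllocs θ s B πhat) (hsum : ∑ i ∈ Finset.univ.erase s, πhat i = k) :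
    SWstar θ s B πhat = SW θ s πhat := by
  rw [SWstar, feasAllocs_eq_singleton_of_sum_eq h hsum, Set.image_singleton, csSup_singleton]

theorem bestAlloc_eq_of_sum_eq {B : Set V} {πhat : V → ℕ}
    (h : πhat ∈ feasAllocs θ s B πhat) (hsum : ∑ i ∈ Finset.univ.erase s, πhat i = k) :
    bestAlloc θ s B πhat = πhat := by
  simpa [feasAllocs_eq_singleton_of_sum_eq h hsum] using (bestAlloc_spec ⟨πhat, h⟩).1

theorem eq_zero_of_mem_feasAllocs {B : Set V} {πhat π : V → ℕ} (hs : s ∉ B)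
    (h : π ∈ feasAllocs θ s B πhat) : π = 0 :=
  funext fun i => h.2.2.1 i (by simp [feasible_eq_empty hs])

theorem SWstar_zero_eq_zero {B : Set V} (h0 : ∀ i, i ≠ s → θ.val i 0 = 0) (hs : s ∉ B) :
    SWstar θ s B 0 = 0 := by
  have hzero : (0 : V → ℕ) ∈ feasAllocs θ s B 0 :=
    ⟨rfl, by simp, fun _ _ => rfl, fun _ _ => le_rfl⟩
  have hfeas : feasAllocs θ s B 0 = {0} :=
    Set.eq_singleton_iff_unique_mem.mpr ⟨hzero, fun _ hπ => eq_zero_of_mem_feasAllocs hs hπ⟩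
  rw [SWstar, hfeas, Set.image_singleton, csSup_singleton]
  exact Finset.sum_eq_zero fun i hi => h0 i (Finset.ne_of_mem_erase hi)

end Welfare

section Orders

variable {V : Type*} [Fintype V] (s : V) (o : V ≃ Fin (Fintype.card V))

def firstAgents (t : ℕ) : Set V := {j | (o j : ℕ) < t}

theorem pred_eq_firstAgents (i : V) : pred o i = firstAgents o (o i) := rfl

theorem predeq_eq_firstAgents (i : V) : predeq o i = firstAgents o (o i + 1) := by
  ext j
  exact Nat.lt_succ_iff.symm

theorem firstAgents_mono : Monotone (firstAgents o) :=
  fun _ _ htu _ hj => lt_of_lt_of_le hj htu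

theorem firstAgents_card : firstAgents o (Fintype.card V) = Set.univ :=
  Set.eq_univ_of_forall fun j => (o j).2

theorem seller_notMem_firstAgents {t : ℕ} (ht : t ≤ o s) : s ∉ firstAgents o t :=
  fun hs => absurd ht (not_le.mpr hs)

end Orders

section Traversal

variable {V : Type*} [Fintype V] [DecidableEq V] {k : ℕ}
  (θ : Profile V k) (s : V) (o : V ≃ Fin (Fintype.card V))

theorem pdaStep_succ_apply_of_ne (t : ℕ) {i : V} (hi : (o i : ℕ) ≠ t) :
    pdaStep θ s o (t + 1) i = pdaStep θ s o t i := by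
  rw [pdaStep]
  dsimp only
  split_ifs with ht hs
  · rfl
  · refine Function.update_of_ne ?_ _ _
    rintro rfl
    simp at hi
  · rfl

theorem pdaStep_succ_seller : pdaStep θ s o (o s + 1) = pdaStep θ s o (o s) := by
  rw [pdaStep]
  simp

theorem pdaStep_succ_of_ne_seller {j : V} (hj : j ≠ s) :
    pdaStep θ s o (o j + 1) = Function.update (pdaStep θ s o (o j)) j
      (bestAlloc θ s (predeq o j) (pdaStep θ s o (o j)) j) := by
  rw [pdaStep]
  simp [hj]

theorem pdaStep_apply_of_le {t : ℕ} {i : V} (ht : t ≤ o i) : pdaStep θ s o t i = 0 := by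
  induction t with
  | zero => rfl
  | succ t ih => rw [pdaStep_succ_apply_of_ne θ s o t (by omega), ih (by omega)]

theorem pdaStep_apply_of_lt {t : ℕ} {i : V} (ht : (o i : ℕ) < t) :
    pdaStep θ s o t i = pdaStep θ s o (o i + 1) i := by
  induction t, ht using Nat.le_induction with
  | base => rfl
  | succ t ht ih => rw [pdaStep_succ_apply_of_ne θ s o t (by omega), ih]

theorem pdaAlloc_apply (i : V) : pdaAlloc θ s o i = pdaStep θ s o (o i + 1) i :=
  pdaStep_apply_of_lt θ s o (o i).2

theorem pdaStep_mem_feasAllocs (t : ℕ) :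
    pdaStep θ s o t ∈ feasAllocs θ s (firstAgents o t) (pdaStep θ s o t) := by
  induction t with
  | zero => exact ⟨rfl, by simp [pdaStep], fun _ _ => rfl, fun _ _ => le_rfl⟩
  | succ t ih =>
    have ih' := feasAllocs_mono (firstAgents_mono o t.le_succ) _ ih
    by_cases ht : t < Fintype.card V
    · obtain ⟨j, rfl⟩ : ∃ j, (o j : ℕ) = t := ⟨o.symm ⟨t, ht⟩, by simp⟩
      by_cases hj : j = s
      · subst hj
        rwa [pdaStep_succ_seller]
      · rw [← predeq_eq_firstAgents] at ih' ⊢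
        rw [pdaStep_succ_of_ne_seller θ s o hj]
        exact update_mem_feasAllocs ih' (bestAlloc_spec ⟨_, ih'⟩).1 hj
    · rwa [pdaStep, dif_neg ht]

theorem pdaStep_eq_zero_of_le {t : ℕ} (ht : t ≤ o s) : pdaStep θ s o t = 0 :=
  eq_zero_of_mem_feasAllocs (seller_notMem_firstAgents s o ht) (pdaStep_mem_feasAllocs θ s o t)

/-- The `Φ t` of the proof idea: `SW*(θ', o_{≺i}, π^{o≺i})` for the agent `i` at
position `t`. -/
noncomputable def pdaOpt (t : ℕ) : ℝ :=
  SWstar θ s (firstAgents o t) (pdaStep θ s o t)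

theorem pdaOpt_eq_zero_of_le (h0 : ∀ i, i ≠ s → θ.val i 0 = 0) {t : ℕ} (ht : t ≤ o s) :
    pdaOpt θ s o t = 0 := by
  rw [pdaOpt, pdaStep_eq_zero_of_le θ s o ht]
  exact SWstar_zero_eq_zero h0 (seller_notMem_firstAgents s o ht)

theorem pdaOpt_seller_succ : pdaOpt θ s o (o s + 1) = SWstar θ s (predeq o s) 0 := by
  rw [pdaOpt, pdaStep_succ_seller, pdaStep_eq_zero_of_le θ s o le_rfl, predeq_eq_firstAgents]

theorem pdaOpt_card :
    pdaOpt θ s o (Fintype.card V) = SWstar θ s Set.univ (pdaAlloc θ s o) := by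
  rw [pdaOpt, firstAgents_card, pdaAlloc]

theorem pdaPay_eq_pdaOpt_sub (h0 : ∀ i, i ≠ s → θ.val i 0 = 0) {j : V} (hj : j ≠ s) :
    pdaPay θ s o j =
      pdaOpt θ s o (o j) - pdaOpt θ s o (o j + 1) + θ.val j (pdaAlloc θ s o j) := by
  set π := pdaStep θ s o (o j)
  have hπ : π ∈ feasAllocs θ s (predeq o j) π := by
    rw [predeq_eq_firstAgents]
    exact feasAllocs_mono (firstAgents_mono o (o j : ℕ).le_succ) _
      (pdaStep_mem_feasAllocs θ s o _)
  have hnext : pdaOpt θ s o (o j + 1) = SWstar θ s (predeq o j) π := by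
    rw [pdaOpt, ← predeq_eq_firstAgents, pdaStep_succ_of_ne_seller θ s o hj,
      SWstar_update_bestAlloc hπ hj]
  rw [pdaPay, if_neg hj, pdaPrior, hnext, pdaOpt, ← pred_eq_firstAgents]
  split_ifs with hsum
  · have hπj : π j = 0 := pdaStep_apply_of_le θ s o le_rfl
    rw [pdaAlloc_apply, pdaStep_succ_of_ne_seller θ s o hj, bestAlloc_eq_of_sum_eq hπ hsum,
      Function.update_self, hπj, h0 j hj, SWstar_eq_SW_of_sum_eq hπ hsum,
      pred_eq_firstAgents, SWstar_eq_SW_of_sum_eq (pdaStep_mem_feasAllocs θ s o _) hsum]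
    ring
  · rfl

end Traversal

end DA

theorem pda_revenue_formula_general {V : Type*} [Fintype V] [DecidableEq V]
    {k : ℕ} (θ : DA.Profile V k) (s : V) (hθ : θ.Valid s)
    (o : V ≃ Fin (Fintype.card V)) :
    ∑ i ∈ Finset.univ.erase s, DA.pdaPay θ s o i
      = (DA.SW θ s (DA.pdaAlloc θ s o)
          - DA.SWstar θ s Set.univ (DA.pdaAlloc θ s o))
        + DA.SWstar θ s (DA.predeq o s) 0 := by
  open DA in
  have h0 : ∀ i, i ≠ s → θ.val i 0 = 0 := fun i hi => (hθ i hi).1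
  calc ∑ i ∈ Finset.univ.erase s, pdaPay θ s o i
      = ∑ i ∈ Finset.univ.erase s, (pdaOpt θ s o (o i) - pdaOpt θ s o (o i + 1))
          + SW θ s (pdaAlloc θ s o) := by
        rw [SW, ← Finset.sum_add_distrib]
        exact Finset.sum_congr rfl fun i hi =>
          pdaPay_eq_pdaOpt_sub θ s o h0 (Finset.ne_of_mem_erase hi)
    _ = (pdaOpt θ s o 0 - pdaOpt θ s o (Fintype.card V))
          - (pdaOpt θ s o (o s) - pdaOpt θ s o (o s + 1)) + SW θ s (pdaAlloc θ s o) := by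
        rw [Finset.sum_erase_eq_sub (Finset.mem_univ s), sum_comp_equiv_fin_sub_succ]
    _ = _ := by
        rw [pdaOpt_eq_zero_of_le θ s o h0 (Nat.zero_le _), pdaOpt_eq_zero_of_le θ s o h0 le_rfl,
          pdaOpt_seller_succ, pdaOpt_card]
        ring

/-- For any report profile θ' and any order o, the seller's
revenue in PDA under order o satisfies
Rev^o(θ') = (SW(θ', π^o) − SW*(θ', V, π^o)) + SW*(θ', o_{≼s}), where π^o is the
final allocation produced by PDA under order o. -/
theorem pda_revenue_formula {V : Type*} [Fintype V] [DecidableEq V]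
    {k : ℕ} (hk : 1 ≤ k) (θ : DA.Profile V k) (s : V) (hθ : θ.Valid s)
    (o : V ≃ Fin (Fintype.card V)) :
    ∑ i ∈ Finset.univ.erase s, DA.pdaPay θ s o i
      = (DA.SW θ s (DA.pdaAlloc θ s o)
          - DA.SWstar θ s Set.univ (DA.pdaAlloc θ s o))
        + DA.SWstar θ s (DA.predeq o s) 0 :=
  pda_revenue_formula_general θ s hθ o
end

section
/- For any ε ∈ (0,1], any diffusion auction mechanism in which every buyer i's (expected) utility u_i satisfies ε·φ_i(θ') ≤ u_i ≤ φ_i(θ') under truthful reporting has expected revenue at most ε·φ_s(θ') + (1−ε)·SW*(θ', V): since revenue equals SW(θ', π) − Σ_{i∈N} u_i ≤ SW*(θ', V) − ε·Σ_{i∈N} φ_i(θ') and Σ_{i∈V} φ_i(θ') = SW*(θ', V), the bound Rev ≤ ε·φ_s(θ') + (1−ε)·SW*(θ', V) holds. -/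
/-!
Revenue is welfare minus the buyers' utilities, so
`Rev = SW(π) − Σ_{i ≠ s} u_i ≤ SW*(V) − ε Σ_{i ≠ s} φ_i`. By efficiency of the Shapley value,
`Σ_i φ_i = SW*(V) − SW*(∅) = SW*(V)`, which turns the bound into `ε φ_s + (1 − ε) SW*(V)`.
Efficiency holds for every set function `f`: in `Σ_i φ_i` the coalition `A` receives the
coefficient `|A| w(|A| − 1) − (n − |A|) w(|A|)` with `w(b) = b! (n − b − 1)! / n!`, and both
products equal `|A|! (n − |A|)! / n!` except that the first vanishes at `A = ∅` and the second
at `A = V`, so the coefficient is `[A = V] − [A = ∅]`.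
-/

section ShapleyEfficiency

open Finset

variable {V : Type*} [Fintype V] [DecidableEq V]

noncomputable def shapleyWeight (n b : ℕ) : ℝ :=
  (b.factorial * (n - b - 1).factorial : ℝ) / (n.factorial : ℝ)

noncomputable def shapleyValue (f : Finset V → ℝ) (i : V) : ℝ :=
  ∑ B ∈ (univ.erase i).powerset,
    shapleyWeight (Fintype.card V) B.card * (f (insert i B) - f B)

lemma natCast_mul_shapleyWeight_sub_one (n a : ℕ) :
    (a : ℝ) * shapleyWeight n (a - 1)
      = (a.factorial * (n - a).factorial : ℝ) / n.factorial - if a = 0 then 1 else 0 := by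
  rcases Nat.eq_zero_or_pos a with rfl | ha
  · simp [Nat.factorial_ne_zero]
  · have hfac : (a : ℝ) * (a - 1).factorial = a.factorial := by
      exact_mod_cast Nat.mul_factorial_pred ha.ne'
    rw [shapleyWeight, if_neg ha.ne', sub_zero, show n - (a - 1) - 1 = n - a by omega,
      ← hfac]
    ring

lemma natCast_sub_mul_shapleyWeight {n a : ℕ} (han : a ≤ n) :
    ((n - a : ℕ) : ℝ) * shapleyWeight n a
      = (a.factorial * (n - a).factorial : ℝ) / n.factorial - if a = n then 1 else 0 := by
  rcases han.lt_or_eq with han | rfl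
  · have hfac : ((n - a : ℕ) : ℝ) * (n - a - 1).factorial = (n - a).factorial := by
      exact_mod_cast Nat.mul_factorial_pred (Nat.sub_ne_zero_of_lt han)
    rw [shapleyWeight, if_neg han.ne, sub_zero, ← hfac]
    ring
  · simp [Nat.factorial_ne_zero]

lemma sum_sum_powerset_erase_insert {M : Type*} [AddCommMonoid M] (F : V → Finset V → M) :
    ∑ i, ∑ B ∈ (univ.erase i).powerset, F i (insert i B) = ∑ A, ∑ i ∈ A, F i A := by
  have hfix (i : V) :
      ∑ B ∈ (univ.erase i).powerset, F i (insert i B) = ∑ A with i ∈ A, F i A :=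
    sum_nbij' (insert i) (erase · i) (by simp) (by simp [subset_erase])
      (fun B hB => erase_insert (by simpa [subset_erase] using hB))
      (fun A hA => insert_erase (by simpa using hA)) (fun _ _ => rfl)
  simp_rw [hfix]
  exact sum_comm' (by simp)

lemma sum_sum_powerset_erase {M : Type*} [AddCommMonoid M] (F : V → Finset V → M) :
    ∑ i, ∑ B ∈ (univ.erase i).powerset, F i B = ∑ B, ∑ i ∈ Bᶜ, F i B :=
  sum_comm' (by simp [subset_erase])

theorem sum_shapleyValue (f : Finset V → ℝ) : ∑ i, shapleyValue f i = f univ - f ∅ := by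
  have hinsert (i : V) :
      ∑ B ∈ (univ.erase i).powerset, shapleyWeight (Fintype.card V) B.card * f (insert i B)
        = ∑ B ∈ (univ.erase i).powerset,
            shapleyWeight (Fintype.card V) ((insert i B).card - 1) * f (insert i B) := by
    refine sum_congr rfl fun B hB => ?_
    rw [card_insert_of_notMem (by simpa [subset_erase] using hB), Nat.add_sub_cancel]
  calc ∑ i, shapleyValue f i
      = ∑ i, ∑ B ∈ (univ.erase i).powerset,
            shapleyWeight (Fintype.card V) ((insert i B).card - 1) * f (insert i B)
        - ∑ i, ∑ B ∈ (univ.erase i).powerset, shapleyWeight (Fintype.card V) B.card * f B := by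
        simp only [shapleyValue, mul_sub, sum_sub_distrib, hinsert]
    _ = ∑ A, (A.card * shapleyWeight (Fintype.card V) (A.card - 1)
          - (Fintype.card V - A.card : ℕ) * shapleyWeight (Fintype.card V) A.card) * f A := by
        rw [sum_sum_powerset_erase_insert
            (fun _ A => shapleyWeight (Fintype.card V) (A.card - 1) * f A),
          sum_sum_powerset_erase, ← sum_sub_distrib]
        simp [sub_mul, mul_assoc, card_compl]
    _ = ∑ A, ((if A = univ then f A else 0) - if A = ∅ then f A else 0) := by
        refine sum_congr rfl fun A _ => ?_
        rw [natCast_mul_shapleyWeight_sub_one, natCast_sub_mul_shapleyWeight A.card_le_univ]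
        simp only [card_eq_iff_eq_univ, card_eq_zero]
        split_ifs <;> ring
    _ = f univ - f ∅ := by simp [sum_sub_distrib]

end ShapleyEfficiency

namespace DA

variable {V : Type*} [Fintype V] [DecidableEq V] {k : ℕ}

lemma shapley_eq_shapleyValue (θ : Profile V k) (s : V) :
    shapley θ s = shapleyValue fun B => SWstar θ s ↑B 0 :=
  rfl

lemma bddAbove_SW_image_feasAllocs (θ : Profile V k) (s : V) (B : Set V) (πhat : V → ℕ) :
    BddAbove (SW θ s '' feasAllocs θ s B πhat) := by
  refine ⟨∑ i ∈ Finset.univ.erase s, ∑ q ∈ Finset.range (k + 1), |θ.val i q|, ?_⟩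
  rintro _ ⟨π, ⟨-, hsum, -, -⟩, rfl⟩
  refine Finset.sum_le_sum fun i hi => ?_
  have hπi : π i ≤ k := (Finset.single_le_sum (fun j _ => Nat.zero_le (π j)) hi).trans hsum
  calc θ.val i (π i) ≤ |θ.val i (π i)| := le_abs_self _
    _ ≤ ∑ q ∈ Finset.range (k + 1), |θ.val i q| :=
      Finset.single_le_sum (f := fun q => |θ.val i q|) (fun q _ => abs_nonneg _)
        (Finset.mem_range_succ_iff.mpr hπi)

lemma SW_le_SWstar {θ : Profile V k} {s : V} {B : Set V} {πhat π : V → ℕ}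
    (hπ : π ∈ feasAllocs θ s B πhat) : SW θ s π ≤ SWstar θ s B πhat :=
  le_csSup (bddAbove_SW_image_feasAllocs θ s B πhat) ⟨π, hπ, rfl⟩

lemma SWstar_empty {θ : Profile V k} {s : V} (hθ : θ.Valid s) (πhat : V → ℕ) :
    SWstar θ s ∅ πhat = 0 := by
  have hzero : SW θ s '' feasAllocs θ s ∅ πhat ⊆ {0} := by
    rintro _ ⟨π, ⟨-, -, hπ, -⟩, rfl⟩
    refine Finset.sum_eq_zero fun i hi => ?_
    have hi : i ≠ s := Finset.ne_of_mem_erase hi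
    rw [hπ i fun h => h.2.1, (hθ i hi).1]
  -- `sSup ∅ = 0` in `ℝ`, so infeasible `πhat` give `0` too
  rcases Set.subset_singleton_iff_eq.mp hzero with h | h <;> simp [SWstar, h]

theorem sum_shapley {θ : Profile V k} {s : V} (hθ : θ.Valid s) :
    ∑ i, shapley θ s i = SWstar θ s Set.univ 0 := by
  rw [shapley_eq_shapleyValue, sum_shapleyValue, Finset.coe_univ, Finset.coe_empty,
    SWstar_empty hθ, sub_zero]

end DA

theorem shapley_fair_revenue_upper_bound_general {V : Type*} [Fintype V] [DecidableEq V]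
    {k : ℕ} (θ : DA.Profile V k) (s : V) (hθ : θ.Valid s)
    (ε : ℝ)
    (π : V → ℕ) (p : V → ℝ)
    (hπ : π ∈ DA.feasAllocs θ s Set.univ 0)
    (hu : ∀ i : V, i ≠ s →
        ε * DA.shapley θ s i ≤ θ.val i (π i) - p i
        ∧ θ.val i (π i) - p i ≤ DA.shapley θ s i) :
    ∑ i ∈ Finset.univ.erase s, p i
      ≤ ε * DA.shapley θ s s + (1 - ε) * DA.SWstar θ s Set.univ 0 := by
  have hrevenue : ∑ i ∈ Finset.univ.erase s, p i
      = DA.SW θ s π - ∑ i ∈ Finset.univ.erase s, (θ.val i (π i) - p i) := by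
    rw [DA.SW, ← Finset.sum_sub_distrib]
    simp
  have hutility : ε * ∑ i ∈ Finset.univ.erase s, DA.shapley θ s i
      ≤ ∑ i ∈ Finset.univ.erase s, (θ.val i (π i) - p i) := by
    rw [Finset.mul_sum]
    exact Finset.sum_le_sum fun i hi => (hu i (Finset.ne_of_mem_erase hi)).1
  have hbuyers := Finset.sum_erase_add Finset.univ (DA.shapley θ s) (Finset.mem_univ s)
  rw [DA.sum_shapley hθ] at hbuyers
  have hwelfare := DA.SW_le_SWstar hπ
  linear_combination hrevenue + hwelfare + hutility - ε * hbuyers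

/-- For any ε ∈ (0,1], any diffusion auction mechanism in which
every buyer i's utility u_i = v_i(π_i) − p_i satisfies
ε·φ_i(θ') ≤ u_i ≤ φ_i(θ') under truthful reporting has revenue at most
ε·φ_s(θ') + (1−ε)·SW*(θ', V). -/
theorem shapley_fair_revenue_upper_bound {V : Type*} [Fintype V] [DecidableEq V]
    {k : ℕ} (hk : 1 ≤ k) (θ : DA.Profile V k) (s : V) (hθ : θ.Valid s)
    (ε : ℝ) (hε0 : 0 < ε) (hε1 : ε ≤ 1)
    (π : V → ℕ) (p : V → ℝ)
    (hπ : π ∈ DA.feasAllocs θ s Set.univ 0)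
    (hu : ∀ i : V, i ≠ s →
        ε * DA.shapley θ s i ≤ θ.val i (π i) - p i
        ∧ θ.val i (π i) - p i ≤ DA.shapley θ s i) :
    ∑ i ∈ Finset.univ.erase s, p i
      ≤ ε * DA.shapley θ s s + (1 - ε) * DA.SWstar θ s Set.univ 0 :=
  shapley_fair_revenue_upper_bound_general θ s hθ ε π p hπ hu
end
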